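/- arXiv:2502.10279 — 3 statements merged into one kernel-verified Lean document; each statement's English description precedes it below -/
import Mathlib

section
/- Let F be a forest in a connected edge-weighted graph G extendable to a minimum spanning tree of G, and let w' be the weights obtained by lowering the weight of every edge of F by the same amount (below the global minimum weight). Then any minimum spanning tree of (G, w') is also a minimum spanning tree of (G, w). -/
/-- An edge set `T` is a spanning tree of `G` if it consists of edges of `G`
and the graph it spans is a tree (connected and acyclic) on all vertices. -/
def IsSpanningTree {V : Type*} (G : SimpleGraph V) (T : Set (Sym2 V)) : Prop :=
  T ⊆ G.edgeSet ∧ (SimpleGraph.fromEdgeSet T).IsTree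

/-- `T` is a minimum spanning tree of `(G, w)`. -/
def IsMST {V : Type*} (G : SimpleGraph V) (w : Sym2 V → ℝ) (T : Finset (Sym2 V)) : Prop :=
  IsSpanningTree G (T : Set (Sym2 V)) ∧
    ∀ T' : Finset (Sym2 V), IsSpanningTree G (T' : Set (Sym2 V)) → ∑ e ∈ T, w e ≤ ∑ e ∈ T', w e

private lemma sum_lowered {V : Type*} [DecidableEq V]
    (w w' : Sym2 V → ℝ) (F : Finset (Sym2 V)) (c : ℝ)
    (hw' : ∀ e, w' e = if e ∈ F then w e - c else w e) (S : Finset (Sym2 V)) :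
    ∑ e ∈ S, w' e = ∑ e ∈ S, w e - c * (S ∩ F).card := by
  have h : ∀ e ∈ S, w' e = w e - (if e ∈ F then c else 0) := by
    intro e _
    rw [hw']
    split <;> simp
  rw [Finset.sum_congr rfl h, Finset.sum_sub_distrib]
  congr 1
  rw [Finset.sum_ite_mem, Finset.sum_const, nsmul_eq_mul, mul_comm]

/-- If the forest F extends to some MST of (G, w), and w' lowers
the weight of every edge of F by the same constant c > 0 (below the global
minimum weight) and leaves all other weights unchanged, then every MST of
(G, w') is also an MST of (G, w). -/
theorem mst_of_uniformly_lowered_weights_is_mst {V : Type*} [Fintype V] [DecidableEq V]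
    (G : SimpleGraph V) (hG : G.Connected)
    (w w' : Sym2 V → ℝ) (F : Finset (Sym2 V)) (c : ℝ) (hc : 0 < c)
    (hFE : (↑F : Set (Sym2 V)) ⊆ G.edgeSet)
    (hacyc : (SimpleGraph.fromEdgeSet (F : Set (Sym2 V))).IsAcyclic)
    (hext : ∃ T : Finset (Sym2 V), IsMST G w T ∧ F ⊆ T)
    (hlow : ∀ e ∈ F, ∀ f ∈ G.edgeSet, w e - c < w f)
    (hw' : ∀ e, w' e = if e ∈ F then w e - c else w e) :
    ∀ T' : Finset (Sym2 V), IsMST G w' T' → IsMST G w T' := by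
  obtain ⟨T, ⟨hTsp, hTopt⟩, hFT⟩ := hext
  intro T' ⟨hT'sp, hT'opt⟩
  -- optimality of T' w.r.t. w'
  have h1 : ∑ e ∈ T', w' e ≤ ∑ e ∈ T, w' e := hT'opt T hTsp
  -- optimality of T w.r.t. w
  have h2 : ∑ e ∈ T, w e ≤ ∑ e ∈ T', w e := hTopt T' hT'sp
  rw [sum_lowered w w' F c hw', sum_lowered w w' F c hw'] at h1
  have hTF : T ∩ F = F := Finset.inter_eq_right.mpr hFT
  rw [hTF] at h1
  have hcard : ((T' ∩ F).card : ℝ) ≤ (F.card : ℝ) := by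
    exact_mod_cast Finset.card_le_card Finset.inter_subset_right
  have hmul : c * ((T' ∩ F).card : ℝ) ≤ c * (F.card : ℝ) :=
    mul_le_mul_of_nonneg_left hcard hc.le
  -- conclude ∑ w T' ≤ ∑ w T
  have hfinal : ∑ e ∈ T', w e ≤ ∑ e ∈ T, w e := by linarith
  exact ⟨hT'sp, fun S hS => le_trans hfinal (hTopt S hS)⟩
end

section
/- In the modified Borůvka edge selection (each vertex u in increasing order considers its minimum-weight incident edge with ties broken toward the smaller neighbor index, and selects it unless the same edge was already selected by its other endpoint), every selected edge belongs to some minimum spanning tree extension: the set of all selected edges is a forest contained in some minimum spanning tree of the graph. -/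
open SimpleGraph



private lemma reach_mono {V : Type*} {G H : SimpleGraph V}
    (h : ∀ a b : V, G.Adj a b → H.Reachable a b) {a b : V} (hr : G.Reachable a b) :
    H.Reachable a b := by
  obtain ⟨p⟩ := hr
  induction p with
  | nil => exact Reachable.refl _
  | cons ha _ ih => exact (h _ _ ha).trans ih

private def eps (n : ℕ) : Sym2 (Fin n) → ℕ :=
  Sym2.lift ⟨fun a b => n * min a.val b.val + max a.val b.val, fun a b => by
    simp only [min_comm, max_comm]⟩

private lemma eps_lt {n : ℕ} (u v x : Fin n) (h : v < x) : eps n s(u, v) < eps n s(u, x) := by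
  simp only [eps, Sym2.lift_mk]
  have hu := u.isLt
  have hx := x.isLt
  have h' : v.val < x.val := h
  rcases le_or_gt u.val v.val with h1 | h1
  · rw [min_eq_left h1, min_eq_left (h1.trans h'.le), max_eq_right h1,
      max_eq_right (h1.trans h'.le)]
    omega
  · rcases le_or_gt x.val u.val with h2 | h2
    · rw [min_eq_right h1.le, min_eq_right h2, max_eq_left h1.le, max_eq_left h2]
      have : n * v.val + n ≤ n * x.val := by
        have := Nat.mul_le_mul_left n (show v.val + 1 ≤ x.val from h')
        simpa [Nat.mul_succ] using this
      omega
    · rw [min_eq_right h1.le, min_eq_left h2.le, max_eq_left h1.le, max_eq_right h2.le]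
      have : n * v.val + n ≤ n * u.val := by
        have := Nat.mul_le_mul_left n (show v.val + 1 ≤ u.val from h1)
        simpa [Nat.mul_succ] using this
      omega

private lemma fromEdgeSet_erase_eq {V : Type*} [DecidableEq V] (T : Finset (Sym2 V)) (e : Sym2 V) :
    fromEdgeSet ((T.erase e : Finset (Sym2 V)) : Set (Sym2 V)) =
      fromEdgeSet (T : Set (Sym2 V)) \ fromEdgeSet {e} := by
  ext a b
  simp only [fromEdgeSet_adj, Finset.coe_erase, Set.mem_diff, Set.mem_singleton_iff,
    Finset.mem_coe, sdiff_adj]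
  tauto

private lemma exists_spanning_tree {n : ℕ} (G : SimpleGraph (Fin n)) (hG : G.Connected) :
    ∃ T : Finset (Sym2 (Fin n)), IsSpanningTree G (↑T : Set (Sym2 (Fin n))) := by
  classical
  have hne : Nonempty (Fin n) := hG.nonempty
  let P : Finset (Sym2 (Fin n)) → Prop :=
    fun T => (T : Set (Sym2 (Fin n))) ⊆ G.edgeSet ∧ (fromEdgeSet (T : Set (Sym2 (Fin n)))).Connected
  let S : Finset (Finset (Sym2 (Fin n))) := Finset.univ.filter P
  have hS : S.Nonempty := by
    refine ⟨(Set.toFinite G.edgeSet).toFinset, ?_⟩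
    simp only [S, P, Finset.mem_filter, Finset.mem_univ, true_and, Set.Finite.coe_toFinset]
    exact ⟨subset_rfl, by rw [fromEdgeSet_edgeSet]; exact hG⟩
  obtain ⟨T, hTS, hTmin⟩ := S.exists_min_image Finset.card hS
  simp only [S, P, Finset.mem_filter, Finset.mem_univ, true_and] at hTS
  refine ⟨T, hTS.1, hTS.2, ?_⟩
  -- acyclicity of the minimal connected edge set
  intro v c hc
  -- first edge of the cycle
  cases c with
  | nil => exact hc.ne_nil rfl
  | cons hadj p =>
    rename_i b
    set e : Sym2 (Fin n) := s(v, b) with he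
    have heT : e ∈ T := by
      have := (fromEdgeSet_adj _).mp hadj
      exact this.1
    -- reachability of v b without edge e
    have hreach : (fromEdgeSet (T : Set (Sym2 (Fin n))) \ fromEdgeSet {e}).Reachable v b := by
      have := (adj_and_reachable_delete_edges_iff_exists_cycle (G := fromEdgeSet (T : Set (Sym2 (Fin n))))
        (v := v) (w := b)).mpr ⟨v, Walk.cons hadj p, hc, by simp [he]⟩
      exact this.2
    rw [← fromEdgeSet_erase_eq] at hreach
    -- T.erase e is also connected
    have hconn' : (fromEdgeSet (↑(T.erase e) : Set (Sym2 (Fin n)))).Connected := by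
      rw [connected_iff]
      refine ⟨fun a d => ?_, hne⟩
      refine reach_mono (fun a d had => ?_) (hTS.2.preconnected a d)
      rw [fromEdgeSet_adj] at had
      by_cases hee : s(a, d) = e
      · rw [he, Sym2.eq_iff] at hee
        rcases hee with ⟨rfl, rfl⟩ | ⟨rfl, rfl⟩
        · exact hreach
        · exact hreach.symm
      · exact Adj.reachable (by rw [fromEdgeSet_adj]; exact ⟨by simp [heT, hee, had.1], had.2⟩)
    have hmem : T.erase e ∈ S := by
      simp only [S, P, Finset.mem_filter, Finset.mem_univ, true_and]
      exact ⟨fun g hg => hTS.1 (Finset.mem_of_mem_erase (by exact_mod_cast hg)), hconn'⟩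
    have := hTmin _ hmem
    have := Finset.card_erase_lt_of_mem heT
    omega

private lemma swap_spanning {n : ℕ} {G : SimpleGraph (Fin n)} {T : Finset (Sym2 (Fin n))}
    (hT : IsSpanningTree G (T : Set (Sym2 (Fin n)))) {u v : Fin n} (huv : G.Adj u v)
    (he : s(u, v) ∉ T) :
    ∃ x : Fin n, x ≠ v ∧ G.Adj u x ∧ s(u, x) ∈ T ∧
      IsSpanningTree G ((insert s(u, v) (T.erase s(u, x)) : Finset (Sym2 (Fin n))) :
        Set (Sym2 (Fin n))) := by
  classical
  have huv' : u ≠ v := huv.ne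
  have hne : Nonempty (Fin n) := ⟨u⟩
  have hconnT : (fromEdgeSet (T : Set (Sym2 (Fin n)))).Connected := hT.2.isConnected
  have hacT : (fromEdgeSet (T : Set (Sym2 (Fin n)))).IsAcyclic := hT.2.IsAcyclic
  obtain ⟨p0⟩ := hconnT u v
  obtain ⟨pt, hpt⟩ := p0.toPath
  clear p0
  cases pt with
  | nil => exact absurd rfl huv'
  | cons hadj1 q =>
    rename_i x
    have hfx : s(u, x) ∈ T ∧ u ≠ x := (fromEdgeSet_adj _).mp hadj1
    set e : Sym2 (Fin n) := s(u, v) with hedef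
    set f : Sym2 (Fin n) := s(u, x) with hfdef
    have hxv : x ≠ v := by
      rintro rfl
      exact he hfx.1
    have hfT : f ∈ T := hfx.1
    have hfe : f ≠ e := by
      intro h
      rw [hfdef, hedef, Sym2.eq_iff] at h
      rcases h with ⟨-, h⟩ | ⟨h1, -⟩
      exacts [hxv h, huv' h1]
    have hqf : f ∉ q.edges := by
      have := hpt.isTrail.edges_nodup
      rw [Walk.edges_cons] at this
      exact (List.nodup_cons.mp this).1
    set T2 : Finset (Sym2 (Fin n)) := insert e (T.erase f) with hT2def
    have hsub2 : (T2 : Set (Sym2 (Fin n))) ⊆ G.edgeSet := by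
      intro g hg
      simp only [hT2def, Finset.coe_insert, Set.mem_insert_iff, Finset.mem_coe,
        Finset.mem_erase] at hg
      rcases hg with rfl | ⟨_, hg⟩
      · exact huv
      · exact hT.1 hg
    -- q transfers into the graph on T.erase f (and hence T2)
    have hq_sub : ∀ g ∈ q.edges, g ∈ (fromEdgeSet ((T.erase f : Finset (Sym2 (Fin n))) :
        Set (Sym2 (Fin n)))).edgeSet := by
      intro g hg
      have hgT : g ∈ (fromEdgeSet (T : Set (Sym2 (Fin n)))).edgeSet :=
        q.edges_subset_edgeSet hg
      rw [edgeSet_fromEdgeSet] at hgT ⊢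
      refine ⟨?_, hgT.2⟩
      simp only [Finset.coe_erase, Set.mem_diff, Set.mem_singleton_iff, Finset.mem_coe]
      exact ⟨hgT.1, fun hge => hqf (hge ▸ hg)⟩
    have hle2 : fromEdgeSet ((T.erase f : Finset (Sym2 (Fin n))) : Set (Sym2 (Fin n))) ≤
        fromEdgeSet (T2 : Set (Sym2 (Fin n))) := by
      apply fromEdgeSet_mono
      intro g hg
      simp only [hT2def, Finset.coe_insert, Set.mem_insert_iff, Finset.mem_coe] at hg ⊢
      exact Or.inr hg
    have hleT : fromEdgeSet ((T.erase f : Finset (Sym2 (Fin n))) : Set (Sym2 (Fin n))) ≤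
        fromEdgeSet (T : Set (Sym2 (Fin n))) := by
      apply fromEdgeSet_mono
      exact_mod_cast Finset.erase_subset f T
    have hadj_e : (fromEdgeSet (T2 : Set (Sym2 (Fin n)))).Adj u v := by
      rw [fromEdgeSet_adj]
      exact ⟨by simp [hT2def]; exact Or.inl hedef.symm, huv'⟩
    have hqe : (fromEdgeSet ((T.erase f : Finset (Sym2 (Fin n))) :
        Set (Sym2 (Fin n)))).Walk x v := q.transfer _ hq_sub
    have hreach_ux : (fromEdgeSet (T2 : Set (Sym2 (Fin n)))).Reachable u x :=
      hadj_e.reachable.trans ((hqe.mapLe hle2).reverse.reachable)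
    -- connectivity
    have hpre : (fromEdgeSet (T2 : Set (Sym2 (Fin n)))).Preconnected := by
      intro a b
      refine reach_mono (fun a b hab => ?_) (hconnT.preconnected a b)
      rw [fromEdgeSet_adj] at hab
      by_cases hgf : s(a, b) = f
      · rw [hfdef, Sym2.eq_iff] at hgf
        rcases hgf with ⟨rfl, rfl⟩ | ⟨rfl, rfl⟩
        · exact hreach_ux
        · exact hreach_ux.symm
      · refine Adj.reachable ?_
        rw [fromEdgeSet_adj]
        refine ⟨?_, hab.2⟩
        simp only [hT2def, Finset.coe_insert, Set.mem_insert_iff, Finset.mem_coe,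
          Finset.mem_erase]
        exact Or.inr ⟨hgf, hab.1⟩
    -- acyclicity
    have hac2 : (fromEdgeSet (T2 : Set (Sym2 (Fin n)))).IsAcyclic := by
      intro r c hc
      by_cases hec : e ∈ c.edges
      · -- the cycle gives reachability avoiding e, yielding a second u-v path in T
        have hAdjR := (adj_and_reachable_delete_edges_iff_exists_cycle
          (G := fromEdgeSet (T2 : Set (Sym2 (Fin n)))) (v := u) (w := v)).mpr ⟨r, c, hc, hec⟩
        obtain ⟨p, hpe⟩ := (reachable_delete_edges_iff_exists_walk
          (G := fromEdgeSet (T2 : Set (Sym2 (Fin n))))).mp hAdjR.2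
        have hp_sub : ∀ g ∈ p.edges, g ∈ (fromEdgeSet ((T.erase f : Finset (Sym2 (Fin n))) :
            Set (Sym2 (Fin n)))).edgeSet := by
          intro g hg
          have hgT : g ∈ (fromEdgeSet (T2 : Set (Sym2 (Fin n)))).edgeSet :=
            p.edges_subset_edgeSet hg
          rw [edgeSet_fromEdgeSet] at hgT ⊢
          refine ⟨?_, hgT.2⟩
          have hge : g ≠ e := fun hge => hpe (by rw [hedef] at hge; rw [← hge]; exact hg)
          have := hgT.1
          simp only [hT2def, Finset.coe_insert, Set.mem_insert_iff, Finset.mem_coe] at this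
          rcases this with rfl | hgg
          · exact absurd rfl hge
          · exact_mod_cast hgg
        set r1 := p.transfer _ hp_sub with hr1
        obtain ⟨r2, hr2⟩ := r1.toPath
        have hr3 : ((r2.mapLe hleT).IsPath) := hr2.mapLe hleT
        have hpaths : (⟨r2.mapLe hleT, hr3⟩ : (fromEdgeSet (T : Set (Sym2 (Fin n)))).Path u v)
            = ⟨Walk.cons hadj1 q, hpt⟩ := hacT.path_unique _ _
        have h4 : r2.mapLe hleT = Walk.cons hadj1 q := congrArg Subtype.val hpaths
        have hfmem : f ∈ (r2.mapLe hleT).edges := by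
          rw [h4, Walk.edges_cons]; exact List.mem_cons_self
        have : f ∈ r2.edges := by
          have := hfmem
          rw [Walk.mapLe, Walk.edges_map] at this
          simpa [Hom.ofLE_apply, Sym2.map_id'] using this
        have hfed : f ∈ (fromEdgeSet ((T.erase f : Finset (Sym2 (Fin n))) :
            Set (Sym2 (Fin n)))).edgeSet := r2.edges_subset_edgeSet this
        rw [edgeSet_fromEdgeSet] at hfed
        have : f ∈ T.erase f := by exact_mod_cast hfed.1
        exact Finset.notMem_erase f T this
      · -- cycle avoiding e lives in the original tree
        have hc_sub : ∀ g ∈ c.edges, g ∈ (fromEdgeSet (T : Set (Sym2 (Fin n)))).edgeSet := by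
          intro g hg
          have hgT : g ∈ (fromEdgeSet (T2 : Set (Sym2 (Fin n)))).edgeSet :=
            c.edges_subset_edgeSet hg
          rw [edgeSet_fromEdgeSet] at hgT ⊢
          refine ⟨?_, hgT.2⟩
          have hge : g ≠ e := fun hge => hec (hge ▸ hg)
          have := hgT.1
          simp only [hT2def, Finset.coe_insert, Set.mem_insert_iff, Finset.mem_coe,
            Finset.mem_erase] at this
          rcases this with rfl | ⟨_, hgg⟩
          · exact absurd rfl hge
          · exact_mod_cast hgg
        exact hacT (c.transfer _ hc_sub) (hc.transfer hc_sub)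
    exact ⟨x, hxv, hT.1 hfT, hfT, hsub2, ⟨(connected_iff _).mpr ⟨hpre, hne⟩, hac2⟩⟩

private lemma acyclic_mono {V : Type*} {G H : SimpleGraph V} (h : H ≤ G)
    (hG : G.IsAcyclic) : H.IsAcyclic :=
  fun _ c hc => hG (c.mapLe h) (hc.mapLe h)

/-- First round of Borůvka's algorithm with consistent
tie-breaking: if each vertex u selects the neighbor sel u giving its
minimum-weight incident edge (ties broken toward the smaller neighbor index),
then the selected edges form a forest contained in some minimum spanning tree. -/
theorem boruvka_round_forest_in_mst {n : ℕ} (G : SimpleGraph (Fin n))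
    (hG : G.Connected) (w : Sym2 (Fin n) → ℝ) (sel : Fin n → Fin n)
    (hadj : ∀ u, G.Adj u (sel u))
    (hmin : ∀ u v, G.Adj u v →
      w s(u, sel u) < w s(u, v) ∨ (w s(u, sel u) = w s(u, v) ∧ sel u ≤ v)) :
    (SimpleGraph.fromEdgeSet {e | ∃ u, e = s(u, sel u)}).IsAcyclic ∧
    ∃ T : Finset (Sym2 (Fin n)), IsMST G w T ∧ ∀ u, s(u, sel u) ∈ T := by
  classical
  obtain ⟨T0, hT0⟩ := exists_spanning_tree G hG
  set S : Finset (Finset (Sym2 (Fin n))) :=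
    Finset.univ.filter (fun T => IsSpanningTree G (T : Set (Sym2 (Fin n)))) with hSdef
  have hmemS : ∀ T : Finset (Sym2 (Fin n)),
      T ∈ S ↔ IsSpanningTree G (T : Set (Sym2 (Fin n))) := by
    intro T
    simp [hSdef]
  obtain ⟨T1, hT1, hT1min⟩ := S.exists_min_image (fun T => ∑ g ∈ T, w g)
    ⟨T0, (hmemS T0).mpr hT0⟩
  set S' : Finset (Finset (Sym2 (Fin n))) :=
    S.filter (fun T => ∑ g ∈ T, w g = ∑ g ∈ T1, w g) with hS'def
  obtain ⟨T, hT, hTmin⟩ := S'.exists_min_image (fun T => ∑ g ∈ T, eps n g)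
    ⟨T1, by simp [hS'def, hT1]⟩
  rw [hS'def, Finset.mem_filter] at hT
  have hTsp : IsSpanningTree G (T : Set (Sym2 (Fin n))) := (hmemS T).mp hT.1
  have hTw : ∑ g ∈ T, w g = ∑ g ∈ T1, w g := hT.2
  have hMST : IsMST G w T := by
    refine ⟨hTsp, fun T' hT' => ?_⟩
    rw [hTw]
    exact hT1min T' ((hmemS T').mpr hT')
  have hsel : ∀ u, s(u, sel u) ∈ T := by
    intro u
    by_contra he
    obtain ⟨x, hxv, hux, hfT, hsp⟩ := swap_spanning hTsp (hadj u) he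
    set e : Sym2 (Fin n) := s(u, sel u) with hedef
    set f : Sym2 (Fin n) := s(u, x) with hfdef
    set T2 : Finset (Sym2 (Fin n)) := insert e (T.erase f) with hT2def
    have heT2 : e ∉ T.erase f := fun h => he (Finset.mem_of_mem_erase h)
    have hsum2 : ∀ φ : Sym2 (Fin n) → ℝ, ∑ g ∈ T2, φ g + φ f = ∑ g ∈ T, φ g + φ e := by
      intro φ
      rw [hT2def, Finset.sum_insert heT2, ← Finset.sum_erase_add T φ hfT]
      ring
    have hsum2' : ∑ g ∈ T2, (eps n g : ℝ) + eps n f = ∑ g ∈ T, (eps n g : ℝ) + eps n e :=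
      hsum2 _
    have hT2S : T2 ∈ S := (hmemS T2).mpr hsp
    rcases hmin u x hux with hlt | ⟨heq, hle⟩
    · -- strict improvement contradicts minimality of T1
      have h1 : ∑ g ∈ T1, w g ≤ ∑ g ∈ T2, w g := hT1min T2 hT2S
      have h2 := hsum2 w
      rw [← hedef, ← hfdef] at hlt
      linarith [hTw]
    · -- tie: eps strictly improves, contradicting minimality of T
      have hx_lt : sel u < x := lt_of_le_of_ne hle (Ne.symm hxv)
      have hT2S' : T2 ∈ S' := by
        rw [hS'def, Finset.mem_filter]
        have h2 := hsum2 w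
        rw [← hedef, ← hfdef] at heq
        refine ⟨hT2S, ?_⟩
        rw [← hTw]
        linarith
      have h3 : ∑ g ∈ T, eps n g ≤ ∑ g ∈ T2, eps n g := hTmin T2 hT2S'
      have h4 : eps n e < eps n f := by
        rw [hedef, hfdef]
        exact eps_lt u (sel u) x hx_lt
      have h5 : (∑ g ∈ T, eps n g : ℝ) ≤ ∑ g ∈ T2, eps n g := by exact_mod_cast h3
      have h6 : (eps n e : ℝ) < eps n f := by exact_mod_cast h4
      push_cast at hsum2' h5
      linarith
  refine ⟨?_, T, hMST, hsel⟩
  apply acyclic_mono (G := SimpleGraph.fromEdgeSet (T : Set (Sym2 (Fin n))))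
  · exact SimpleGraph.fromEdgeSet_mono (by rintro g ⟨u, rfl⟩; exact hsel u)
  · exact hTsp.2.IsAcyclic
end

section
/- The graph consisting of a bi-directed k-clique (with the edge from c back to the root r removed) together with a bi-directed path of n − k vertices and a single edge from the clique vertex c to an endpoint of the path admits a spanning out-arborescence rooted at r, and any out-arborescence rooted at r contains exactly k − 1 edges with both endpoints in the clique. -/
/-- Reachability along the directed edge set `E`. -/
def DReach {V : Type*} (E : Set (V × V)) (a b : V) : Prop :=
  Relation.ReflTransGen (fun x y => (x, y) ∈ E) a b

/-- `T` is a spanning out-arborescence of the directed graph with edge set `E`,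
rooted at `r`. -/
def IsArborescence {V : Type*} (E T : Set (V × V)) (r : V) : Prop :=
  T ⊆ E ∧ (∀ u, (u, r) ∉ T) ∧ (∀ v, v ≠ r → ∃! u, (u, v) ∈ T) ∧ ∀ v, DReach T r v

/-- The graph consisting of a bi-directed k-clique with the edge
from c = c_k back to the root r = c₁ removed, a bi-directed path on n − k
vertices, and the single edge (c, p₁), admits a spanning out-arborescence
rooted at r, and every such arborescence has exactly k − 1 edges with both
endpoints in the clique. -/
theorem clique_path_arborescence (n k : ℕ) (hk : 2 ≤ k) (hkn : k < n) :
    ∀ E : Set ((Fin k ⊕ Fin (n - k)) × (Fin k ⊕ Fin (n - k))),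
      E = {p | match p with
        | (Sum.inl i, Sum.inl j) => i ≠ j ∧ ¬((i : ℕ) = k - 1 ∧ (j : ℕ) = 0)
        | (Sum.inr i, Sum.inr j) => (i : ℕ) + 1 = (j : ℕ) ∨ (j : ℕ) + 1 = (i : ℕ)
        | (Sum.inl i, Sum.inr j) => (i : ℕ) = k - 1 ∧ (j : ℕ) = 0
        | (Sum.inr _, Sum.inl _) => False} →
      (∀ v, DReach E (Sum.inl ⟨0, by omega⟩) v) ∧
      (∃ T, IsArborescence E T (Sum.inl ⟨0, by omega⟩)) ∧
      (∀ T, IsArborescence E T (Sum.inl ⟨0, by omega⟩) →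
        {p ∈ T | ∃ i j : Fin k, p = (Sum.inl i, Sum.inl j)}.ncard = k - 1) := by
  intro E hE
  have hk0 : 0 < k := by omega
  have hnk : 0 < n - k := by omega
  set r : Fin k ⊕ Fin (n - k) := Sum.inl ⟨0, hk0⟩ with hrdef
  -- membership characterizations
  have hE_ll : ∀ i j : Fin k, (Sum.inl i, Sum.inl j) ∈ E ↔
      (i ≠ j ∧ ¬((i : ℕ) = k - 1 ∧ (j : ℕ) = 0)) := by
    subst hE; intro i j; exact Iff.rfl
  have hE_rr : ∀ i j : Fin (n - k),
      ((Sum.inr i : Fin k ⊕ Fin (n - k)), Sum.inr j) ∈ E ↔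
      ((i : ℕ) + 1 = (j : ℕ) ∨ (j : ℕ) + 1 = (i : ℕ)) := by
    subst hE; intro i j; exact Iff.rfl
  have hE_lr : ∀ (i : Fin k) (j : Fin (n - k)),
      (Sum.inl i, Sum.inr j) ∈ E ↔ ((i : ℕ) = k - 1 ∧ (j : ℕ) = 0) := by
    subst hE; intro i j; exact Iff.rfl
  have hE_rl : ∀ (i : Fin (n - k)) (j : Fin k),
      ((Sum.inr i : Fin k ⊕ Fin (n - k)), Sum.inl j) ∉ E := by
    subst hE; intro i j h; exact h
  -- the tree T: star from r into the clique, r → c → path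
  set T : Set ((Fin k ⊕ Fin (n - k)) × (Fin k ⊕ Fin (n - k))) :=
    {p | match p with
      | (Sum.inl i, Sum.inl j) => (i : ℕ) = 0 ∧ (j : ℕ) ≠ 0
      | (Sum.inr i, Sum.inr j) => (i : ℕ) + 1 = (j : ℕ)
      | (Sum.inl i, Sum.inr j) => (i : ℕ) = k - 1 ∧ (j : ℕ) = 0
      | (Sum.inr _, Sum.inl _) => False} with hTdef
  have hT_ll : ∀ i j : Fin k, (Sum.inl i, Sum.inl j) ∈ T ↔
      ((i : ℕ) = 0 ∧ (j : ℕ) ≠ 0) := fun i j => Iff.rfl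
  have hT_rr : ∀ i j : Fin (n - k),
      ((Sum.inr i : Fin k ⊕ Fin (n - k)), Sum.inr j) ∈ T ↔
      ((i : ℕ) + 1 = (j : ℕ)) := fun i j => Iff.rfl
  have hT_lr : ∀ (i : Fin k) (j : Fin (n - k)),
      (Sum.inl i, Sum.inr j) ∈ T ↔ ((i : ℕ) = k - 1 ∧ (j : ℕ) = 0) := fun i j => Iff.rfl
  have hT_rl : ∀ (i : Fin (n - k)) (j : Fin k),
      ((Sum.inr i : Fin k ⊕ Fin (n - k)), Sum.inl j) ∉ T := fun i j h => h
  have hTE : T ⊆ E := by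
    rintro ⟨u, v⟩ hp
    rcases u with i | i <;> rcases v with j | j
    · rw [hT_ll] at hp
      rw [hE_ll]
      refine ⟨fun h => hp.2 (by rw [h] at hp; exact hp.1), fun h => ?_⟩
      omega
    · rw [hT_lr] at hp; rw [hE_lr]; exact hp
    · exact absurd hp (hT_rl i j)
    · rw [hT_rr] at hp; rw [hE_rr]; exact Or.inl hp
  -- reachability in T
  have hreachT : ∀ v, DReach T r v := by
    have hc : DReach T r (Sum.inl ⟨k - 1, by omega⟩) := by
      apply Relation.ReflTransGen.single
      rw [hT_ll]; exact ⟨rfl, by simp; omega⟩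
    have hpath : ∀ m (hm : m < n - k), DReach T r (Sum.inr ⟨m, hm⟩) := by
      intro m
      induction m with
      | zero =>
        intro hm
        exact hc.tail (by rw [hT_lr]; exact ⟨rfl, rfl⟩)
      | succ m ih =>
        intro hm
        exact (ih (by omega)).tail (by rw [hT_rr])
    intro v
    rcases v with j | j
    · by_cases hj : (j : ℕ) = 0
      · have : j = ⟨0, hk0⟩ := Fin.ext hj
        rw [this]
        exact Relation.ReflTransGen.refl
      · exact Relation.ReflTransGen.single (by rw [hT_ll]; exact ⟨rfl, hj⟩)
    · have := hpath j.1 j.2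
      simpa using this
  have hreachE : ∀ v, DReach E r v := by
    intro v
    exact Relation.ReflTransGen.mono (fun x y h => hTE h) _ _ (hreachT v)
  have hrval : ∀ j : Fin k, Sum.inl j = r ↔ (j : ℕ) = 0 := by
    intro j
    constructor
    · intro h
      have : j = ⟨0, hk0⟩ := Sum.inl.injEq _ _ ▸ (by injection h)
      rw [this]
    · intro h; rw [hrdef]; congr 1; exact Fin.ext h
  have hArb : IsArborescence E T r := by
    refine ⟨hTE, ?_, ?_, hreachT⟩
    · rintro (i | i) h
      · rw [hrdef, hT_ll] at h; exact h.2 rfl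
      · exact hT_rl i _ h
    · rintro (j | j) hv
      · have hj : (j : ℕ) ≠ 0 := fun h => hv ((hrval j).2 h)
        refine ⟨Sum.inl ⟨0, hk0⟩, (hT_ll _ _).2 ⟨rfl, hj⟩, ?_⟩
        rintro (i | i) hu
        · rw [hT_ll] at hu; congr 1; exact Fin.ext hu.1
        · exact absurd hu (hT_rl i j)
      · by_cases hj : (j : ℕ) = 0
        · refine ⟨Sum.inl ⟨k - 1, by omega⟩, (hT_lr _ _).2 ⟨rfl, hj⟩, ?_⟩
          rintro (i | i) hu
          · rw [hT_lr] at hu; congr 1; exact Fin.ext (by simpa using hu.1)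
          · rw [hT_rr] at hu; omega
        · refine ⟨Sum.inr ⟨(j : ℕ) - 1, by omega⟩, (hT_rr _ _).2 (by simp; omega), ?_⟩
          rintro (i | i) hu
          · rw [hT_lr] at hu; omega
          · rw [hT_rr] at hu; congr 1; exact Fin.ext (by simp; omega)
  refine ⟨hreachE, ⟨T, hArb⟩, ?_⟩
  -- counting part
  intro S hS
  obtain ⟨hSE, hSr, hSuniq, hSreach⟩ := hS
  set A : Set ((Fin k ⊕ Fin (n - k)) × (Fin k ⊕ Fin (n - k))) :=
    {p ∈ S | ∃ i j : Fin k, p = (Sum.inl i, Sum.inl j)} with hAdef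
  set B : Set (Fin k ⊕ Fin (n - k)) := Sum.inl '' {j : Fin k | (j : ℕ) ≠ 0} with hBdef
  have hbij : Set.BijOn Prod.snd A B := by
    refine ⟨?_, ?_, ?_⟩
    · rintro ⟨u, v⟩ ⟨hpS, i, j, hpe⟩
      obtain ⟨h1, h2⟩ := Prod.mk.injEq .. ▸ hpe
      subst h1; subst h2
      have hj : (j : ℕ) ≠ 0 := by
        intro h
        exact hSr (Sum.inl i) ((hrval j).2 h ▸ hpS)
      exact ⟨j, hj, rfl⟩
    · rintro ⟨u, v⟩ ⟨hpS, i, j, hpe⟩ ⟨u', v'⟩ ⟨hqS, i', j', hqe⟩ hsnd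
      obtain ⟨h1, h2⟩ := Prod.mk.injEq .. ▸ hpe
      subst h1; subst h2
      obtain ⟨h1', h2'⟩ := Prod.mk.injEq .. ▸ hqe
      subst h1'; subst h2'
      simp only at hsnd
      obtain rfl : j = j' := Sum.inl_injective hsnd
      have hj : (j : ℕ) ≠ 0 := by
        intro h
        exact hSr (Sum.inl i) ((hrval j).2 h ▸ hpS)
      have hne : Sum.inl j ≠ r := fun h => hj ((hrval j).1 h)
      obtain ⟨u, hu, huniq⟩ := hSuniq (Sum.inl j) hne
      have e1 := huniq (Sum.inl i) hpS
      have e2 := huniq (Sum.inl i') hqS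
      rw [Prod.mk.injEq]
      exact ⟨e1.trans e2.symm, rfl⟩
    · rintro v ⟨j, hj, rfl⟩
      have hne : Sum.inl j ≠ r := fun h => hj ((hrval j).1 h)
      obtain ⟨u, hu, _⟩ := hSuniq (Sum.inl j) hne
      rcases u with i | i
      · exact ⟨(Sum.inl i, Sum.inl j), ⟨hu, i, j, rfl⟩, rfl⟩
      · exact absurd (hSE hu) (hE_rl i j)
  have hcard : A.ncard = B.ncard := by
    rw [← hbij.image_eq]
    exact (Set.ncard_image_of_injOn hbij.injOn).symm
  rw [hcard, hBdef, Set.ncard_image_of_injective _ Sum.inl_injective]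
  have hset : {j : Fin k | (j : ℕ) ≠ 0} = Set.univ \ {(⟨0, hk0⟩ : Fin k)} := by
    ext j
    simp [Fin.ext_iff]
  rw [hset, Set.ncard_diff (Set.subset_univ _),
    Set.ncard_univ, Set.ncard_singleton, Nat.card_eq_fintype_card, Fintype.card_fin]
end
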